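/- arXiv:cs/9911014 — 4 statements merged into one kernel-verified Lean document; each statement's English description precedes it below -/
import Mathlib

section
/- Let n be even, let φ = ψ₁ ∧ ⋯ ∧ ψ_k be a 3CNF formula over variables p₁,…,p_n where each clause ψ_i = ℓ_{i1} ∨ ℓ_{i2} ∨ ℓ_{i3} contains three literals on three distinct variables, and let f be a propositional variable distinct from p₁,…,p_n. Then the quantified Boolean formula ∃p₁∀p₂∃p₃⋯∃p_{n-1}∀p_n φ is true if and only if the poor man's formula g = φ_exp ∧ ⋀_{i=1}^k label_false(ℓ̄_{i1} ∧ ℓ̄_{i2} ∧ ℓ̄_{i3}) ∧ (◇□)^{n/2} f̄ is satisfiable with respect to F≤2, where φ_exp = ⋀_{i=1}^n □^{i-1}(◇□^{n-i} p_i ∧ ◇□^{n-i} p̄_i), ℓ̄ denotes the complementary literal of ℓ, and for literals with variables p_a, p_b, p_c (a < b < c), label_false(ℓ₁ ∧ ℓ₂ ∧ ℓ₃) = □^{a-1}◇□^{b-a-1}◇□^{c-b-1}◇□^{n-c}(ℓ₁ ∧ ℓ₂ ∧ ℓ₃ ∧ f). -/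
/-!
If the QBF is true, take the full binary tree of depth `n` on bit strings, with `p_i` reading
the `i`-th bit and `f` true exactly at the strings whose bits falsify `φ`. Every node has both
children, so `φ_exp` holds at the root; each `label_false` formula holds by descending along the
bits that falsify its clause; and `(◇□)^{n/2} f̄` holds by letting the diamonds follow a winning
strategy of the existential player.

Conversely, `φ_exp` provides below every world of depth `j < n` two successors that fix `p_{j+1}`
to true and to false at all their depth-`n` descendants. In a frame of `F≤2` these are the only
successors, so a successor is determined by the value of `p_{j+1}` below it. Hence the diamonds
of `label_false(ℓ̄₁ ∧ ℓ̄₂ ∧ ℓ̄₃)` are witnessed on every branch that falsifies the clause, which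
puts `f` at the leaf of every such branch, and the witnesses of `(◇□)^{n/2} f̄` form a winning
strategy of the existential player that never reaches a falsifying leaf.
-/

namespace PoorMansModal

/-- Modal formulas over propositional variables of type `α`: variables `p`,
negated variables `p̄`, general negation, conjunction, disjunction, box, diamond,
and the constants `true` and `false`. -/
inductive Fml (α : Type) : Type where
  | var : α → Fml α
  | nvar : α → Fml α
  | neg : Fml α → Fml α
  | and : Fml α → Fml α → Fml α
  | or : Fml α → Fml α → Fml α
  | box : Fml α → Fml α
  | dia : Fml α → Fml α
  | tru : Fml α
  | fls : Fml α

/-- A Kripke model: a nonempty set of worlds, an accessibility relation, and a valuation. -/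
structure Kripke (α : Type) where
  World : Type
  nonempty : Nonempty World
  R : World → World → Prop
  V : α → World → Prop

/-- Truth of a formula at a world of a model. -/
def Sat {α : Type} (M : Kripke α) : Fml α → M.World → Prop
  | .var p, w => M.V p w
  | .nvar p, w => ¬ M.V p w
  | .neg φ, w => ¬ Sat M φ w
  | .and φ ψ, w => Sat M φ w ∧ Sat M ψ w
  | .or φ ψ, w => Sat M φ w ∨ Sat M ψ w
  | .box φ, w => ∀ v, M.R w v → Sat M φ v
  | .dia φ, w => ∃ v, M.R w v ∧ Sat M φ v
  | .tru, _ => True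
  | .fls, _ => False

/-- Modal depth: depth of nesting of `□` and `◇`. -/
def mdep {α : Type} : Fml α → ℕ
  | .var _ => 0
  | .nvar _ => 0
  | .neg φ => mdep φ
  | .and φ ψ => max (mdep φ) (mdep ψ)
  | .or φ ψ => max (mdep φ) (mdep ψ)
  | .box φ => mdep φ + 1
  | .dia φ => mdep φ + 1
  | .tru => 0
  | .fls => 0

/-- Conjunction of a list of formulas; the empty conjunction is the always-true formula. -/
def bigConj {α : Type} : List (Fml α) → Fml α
  | [] => .tru
  | [φ] => φ
  | φ :: rest => .and φ (bigConj rest)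

/-- `□^k φ`. -/
def boxI {α : Type} : ℕ → Fml α → Fml α
  | 0, φ => φ
  | k + 1, φ => .box (boxI k φ)

/-- `◇^k φ`. -/
def diaI {α : Type} : ℕ → Fml α → Fml α
  | 0, φ => φ
  | k + 1, φ => .dia (diaI k φ)

/-- `(◇□)^k φ`. -/
def diaBoxI {α : Type} : ℕ → Fml α → Fml α
  | 0, φ => φ
  | k + 1, φ => .dia (.box (diaBoxI k φ))

/-- The literal with variable `l.1` and sign `l.2` (`true` = positive). -/
def litF {α : Type} (l : α × Bool) : Fml α := if l.2 then .var l.1 else .nvar l.1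

/-- The variable `p` occurs in the formula. -/
def occursV {α : Type} (p : α) : Fml α → Prop
  | .var q => p = q
  | .nvar q => p = q
  | .neg φ => occursV p φ
  | .and φ ψ => occursV p φ ∨ occursV p ψ
  | .or φ ψ => occursV p φ ∨ occursV p ψ
  | .box φ => occursV p φ
  | .dia φ => occursV p φ
  | .tru => False
  | .fls => False

/-- Poor man's formulas: built from literals, `∧`, `□`, `◇` only. -/
def PoorF {α : Type} : Fml α → Prop
  | .var _ => True
  | .nvar _ => True
  | .and φ ψ => PoorF φ ∧ PoorF ψ
  | .box φ => PoorF φ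
  | .dia φ => PoorF φ
  | _ => False

/-- Formulas of the language `L`: built from literals, `∧`, `∨`, `□`, `◇`. -/
def InL {α : Type} : Fml α → Prop
  | .var _ => True
  | .nvar _ => True
  | .and φ ψ => InL φ ∧ InL ψ
  | .or φ ψ => InL φ ∧ InL ψ
  | .box φ => InL φ
  | .dia φ => InL φ
  | _ => False

/-- Every world has at most one successor. -/
def AtMostOne {W : Type} (R : W → W → Prop) : Prop :=
  ∀ w v v', R w v → R w v' → v = v'

/-- Every world has at least one successor. -/
def AtLeastOne {W : Type} (R : W → W → Prop) : Prop :=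
  ∀ w, ∃ v, R w v

/-- Every world has at most two successors. -/
def AtMostTwo {W : Type} (R : W → W → Prop) : Prop :=
  ∀ w v₁ v₂ v₃, R w v₁ → R w v₂ → R w v₃ → v₁ = v₂ ∨ v₁ = v₃ ∨ v₂ = v₃

/-- `chainR R n w v`: there is an `R`-path of length exactly `n` from `w` to `v`. -/
def chainR {W : Type} (R : W → W → Prop) : ℕ → W → W → Prop
  | 0, w, v => w = v
  | k + 1, w, v => ∃ u, R w u ∧ chainR R k u v

/-- `R` is the parent-child relation of a rooted tree with root `root`
in which every node has at most two children. -/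
structure IsBinTree {W : Type} (R : W → W → Prop) (root : W) : Prop where
  reach : ∀ w, Relation.ReflTransGen R root w
  root_no_parent : ∀ w, ¬ R w root
  unique_parent : ∀ w v v', R v w → R v' w → v = v'
  acyclic : ∀ w, ¬ Relation.TransGen R w w
  at_most_two_children : ∀ w v₁ v₂ v₃, R w v₁ → R w v₂ → R w v₃ → v₁ = v₂ ∨ v₁ = v₃ ∨ v₂ = v₃

/-- `φ_exp = ⋀_{i=1}^n □^{i-1}(◇□^{n-i} p_i ∧ ◇□^{n-i} p̄_i)`, with `p_i = var i`. -/
def phiExp (n : ℕ) : Fml ℕ :=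
  bigConj ((List.range n).map (fun j =>
    boxI j (.and (.dia (boxI (n - 1 - j) (.var (j + 1))))
                 (.dia (boxI (n - 1 - j) (.nvar (j + 1)))))))

/-- Satisfiability with respect to the class of all frames. -/
def SatAll (φ : Fml ℕ) : Prop := ∃ (M : Kripke ℕ) (w : M.World), Sat M φ w

/-- Satisfiability with respect to `F≤1`. -/
def SatLe1 (φ : Fml ℕ) : Prop := ∃ M : Kripke ℕ, AtMostOne M.R ∧ ∃ w, Sat M φ w

/-- Satisfiability with respect to `F≥1`. -/
def SatGe1 (φ : Fml ℕ) : Prop := ∃ M : Kripke ℕ, AtLeastOne M.R ∧ ∃ w, Sat M φ w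

/-- Satisfiability with respect to `F≤2`. -/
def SatLe2 (φ : Fml ℕ) : Prop := ∃ M : Kripke ℕ, AtMostTwo M.R ∧ ∃ w, Sat M φ w

/-- A one-world model with no successors, realizing the boolean assignment `v`;
truth at its world is propositional truth for formulas without modal operators. -/
def propModel (v : ℕ → Bool) : Kripke ℕ :=
  { World := Unit, nonempty := ⟨()⟩, R := fun _ _ => False, V := fun p _ => v p = true }

/-- Propositional satisfaction of `φ` under the assignment `v`. -/
def PropSat (v : ℕ → Bool) (φ : Fml ℕ) : Prop := Sat (propModel v) φ ()


/-- Propositional formulas: no modal operators (and no general negation or constants). -/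
def IsProp : Fml ℕ → Prop
  | .var _ => True
  | .nvar _ => True
  | .and φ ψ => IsProp φ ∧ IsProp ψ
  | .or φ ψ => IsProp φ ∧ IsProp ψ
  | _ => False

/-- `qbfTrue φ i k v`: truth of the quantified Boolean formula with `k` remaining
alternating quantifiers over the variables `i, i+1, …, i+k-1` (existential at odd
indices, universal at even indices), with matrix `φ`, under the current assignment `v`.
Starting it as `qbfTrue φ 1 n v` gives the truth of `∃p₁ ∀p₂ ∃p₃ ⋯ ∀p_n φ` for even `n`. -/
def qbfTrue (φ : Fml ℕ) : ℕ → ℕ → (ℕ → Bool) → Prop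
  | _, 0, v => PropSat v φ
  | i, k + 1, v =>
      if i % 2 = 1 then ∃ b, qbfTrue φ (i + 1) k (Function.update v i b)
      else ∀ b, qbfTrue φ (i + 1) k (Function.update v i b)

/-- `label_false(ℓ₁ ∧ ℓ₂ ∧ ℓ₃) =
□^{a-1} ◇ □^{b-a-1} ◇ □^{c-b-1} ◇ □^{n-c} (ℓ₁ ∧ ℓ₂ ∧ ℓ₃ ∧ f)`, where the literals
`ℓ₁, ℓ₂, ℓ₃` have variables `a, b, c` and signs `s₁, s₂, s₃`, and `fv` is the
variable `f`. -/
def labelFalse (n a b c : ℕ) (s₁ s₂ s₃ : Bool) (fv : ℕ) : Fml ℕ :=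
  boxI (a - 1) (.dia (boxI (b - a - 1) (.dia (boxI (c - b - 1) (.dia (boxI (n - c)
    (.and (litF (a, s₁)) (.and (litF (b, s₂)) (.and (litF (c, s₃)) (.var fv))))))))))

variable {α : Type} {W : Type} {R : W → W → Prop}

theorem chainR_add {m₁ m₂ : ℕ} {w v : W} :
    chainR R (m₁ + m₂) w v ↔ ∃ u, chainR R m₁ w u ∧ chainR R m₂ u v := by
  induction m₁ generalizing w with
  | zero => simp [chainR]
  | succ m ih =>
    rw [Nat.succ_add]
    simp only [chainR, ih]
    constructor
    · rintro ⟨u, hu, x, hx, hxv⟩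
      exact ⟨x, ⟨u, hu, hx⟩, hxv⟩
    · rintro ⟨x, ⟨u, hu, hx⟩, hxv⟩
      exact ⟨u, hu, x, hx, hxv⟩

theorem chainR.trans {m k : ℕ} {w u v : W} (h₁ : chainR R m w u) (h₂ : chainR R k u v) :
    chainR R (m + k) w v :=
  chainR_add.2 ⟨u, h₁, h₂⟩

theorem chainR.snoc {m : ℕ} {w u v : W} (h₁ : chainR R m w u) (h₂ : R u v) :
    chainR R (m + 1) w v :=
  h₁.trans ⟨v, h₂, rfl⟩

section Semantics
variable {M : Kripke α}

theorem sat_bigConj {L : List (Fml α)} {w : M.World} :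
    Sat M (bigConj L) w ↔ ∀ φ ∈ L, Sat M φ w := by
  induction L with
  | nil => simp [bigConj, Sat]
  | cons φ rest ih =>
    cases rest with
    | nil => simp [bigConj]
    | cons ψ rest => simp only [bigConj, Sat, ih, List.forall_mem_cons]

theorem sat_boxI {m : ℕ} {φ : Fml α} {w : M.World} :
    Sat M (boxI m φ) w ↔ ∀ v, chainR M.R m w v → Sat M φ v := by
  induction m generalizing w with
  | zero => simp [boxI, chainR]
  | succ m ih =>
    simp only [boxI, Sat, ih, chainR]
    constructor
    · rintro h v ⟨u, hu, hv⟩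
      exact h u hu v hv
    · exact fun h u hu v hv => h v ⟨u, hu, hv⟩

theorem sat_litF {p : α} {s : Bool} {w : M.World} :
    Sat M (litF (p, s)) w ↔ (M.V p w ↔ s = true) := by
  cases s <;> simp [litF, Sat]

end Semantics

theorem qbfTrue_add_two {φ : Fml ℕ} {i k : ℕ} {v : ℕ → Bool} (hi : i % 2 = 1) :
    qbfTrue φ i (k + 2) v ↔
      ∃ b, ∀ b', qbfTrue φ (i + 2) k (Function.update (Function.update v i b) (i + 1) b') := by
  simp only [qbfTrue, if_pos hi, if_neg (show ¬ (i + 1) % 2 = 1 by omega)]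

def cnf3 (k : ℕ) (a b c : Fin k → ℕ) (s₁ s₂ s₃ : Fin k → Bool) : Fml ℕ :=
  bigConj ((List.finRange k).map (fun i =>
    .or (litF (a i, s₁ i)) (.or (litF (b i, s₂ i)) (litF (c i, s₃ i)))))

section CNF
variable {k : ℕ} {a b c : Fin k → ℕ} {s₁ s₂ s₃ : Fin k → Bool}

theorem propSat_cnf3 {v : ℕ → Bool} :
    PropSat v (cnf3 k a b c s₁ s₂ s₃) ↔
      ∀ i, v (a i) = s₁ i ∨ v (b i) = s₂ i ∨ v (c i) = s₃ i := by
  refine (sat_bigConj (M := propModel v)).trans ?_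
  simp [Sat, sat_litF, propModel]

theorem propSat_cnf3_congr {n : ℕ}
    (hrange : ∀ i, 1 ≤ a i ∧ a i < b i ∧ b i < c i ∧ c i ≤ n)
    {v v' : ℕ → Bool} (hvv' : ∀ p, 1 ≤ p → p ≤ n → v p = v' p)
    (hv : PropSat v (cnf3 k a b c s₁ s₂ s₃)) : PropSat v' (cnf3 k a b c s₁ s₂ s₃) := by
  rw [propSat_cnf3] at hv ⊢
  intro i
  obtain ⟨h₁, h₂, h₃, h₄⟩ := hrange i
  rw [← hvv' (a i) (by omega) (by omega), ← hvv' (b i) (by omega) (by omega),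
    ← hvv' (c i) (by omega) (by omega)]
  exact hv i

end CNF

def HasBranches (M : Kripke ℕ) (w₀ : M.World) (n : ℕ) : Prop :=
  ∀ j < n, ∀ u, chainR M.R j w₀ u → ∀ bo : Bool,
    ∃ v, M.R u v ∧ ∀ x, chainR M.R (n - 1 - j) v x → (M.V (j + 1) x ↔ bo = true)

theorem sat_phiExp_iff {M : Kripke ℕ} {w₀ : M.World} {n : ℕ} :
    Sat M (phiExp n) w₀ ↔ HasBranches M w₀ n := by
  simp only [phiExp, sat_bigConj, List.forall_mem_map, List.mem_range, sat_boxI, Sat,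
    HasBranches, Bool.forall_bool]
  simp [and_comm]

/-- `boxDia [m₀, m₁, …, m_r] φ = □^{m₀} ◇ □^{m₁} ◇ ⋯ □^{m_r} ◇ φ`. -/
def boxDia : List ℕ → Fml α → Fml α
  | [], φ => φ
  | m :: ms, φ => boxI m (.dia (boxDia ms φ))

def boxDiaDepth : List ℕ → ℕ
  | [] => 0
  | m :: ms => m + 1 + boxDiaDepth ms

/-- The depths at which the diamonds of `boxDia ms` are evaluated, when it is evaluated at
depth `d`. -/
def diaDepths : ℕ → List ℕ → List ℕ
  | _, [] => []
  | d, m :: ms => (d + m) :: diaDepths (d + m + 1) ms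

theorem labelFalse_eq_boxDia (n a b c : ℕ) (s₁ s₂ s₃ : Bool) (fv : ℕ) :
    labelFalse n a b c s₁ s₂ s₃ fv = boxDia [a - 1, b - a - 1, c - b - 1]
      (boxI (n - c)
        (.and (litF (a, s₁)) (.and (litF (b, s₂)) (.and (litF (c, s₃)) (.var fv))))) :=
  rfl

namespace HasBranches
variable {M : Kripke ℕ} {w₀ : M.World} {n : ℕ}

theorem exists_chainR (hB : HasBranches M w₀ n) {j d : ℕ} {u : M.World}
    (hu : chainR M.R j w₀ u) (hjd : j + d ≤ n) :
    ∃ x, chainR M.R d u x := by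
  induction d generalizing j u with
  | zero => exact ⟨u, rfl⟩
  | succ d ih =>
    obtain ⟨v, hv, -⟩ := hB j (by omega) u hu true
    obtain ⟨x, hx⟩ := ih (hu.snoc hv) (by omega)
    exact ⟨x, v, hv, hx⟩

theorem eq_of_agree (hB : HasBranches M w₀ n) (hM2 : AtMostTwo M.R) {j : ℕ} (hj : j < n)
    {u z q xz xq : M.World} (hu : chainR M.R j w₀ u) (hz : M.R u z) (hq : M.R u q)
    (hxz : chainR M.R (n - 1 - j) z xz) (hxq : chainR M.R (n - 1 - j) q xq)
    (hagree : M.V (j + 1) xz ↔ M.V (j + 1) xq) : z = q := by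
  classical
  obtain ⟨v, hv, hvx⟩ := hB j hj u hu (!decide (M.V (j + 1) xz))
  rcases hM2 u z q v hz hq hv with h | rfl | rfl
  · exact h
  · simpa using hvx xz hxz
  · simpa [hagree] using hvx xq hxq

theorem exists_uniform_of_R (hB : HasBranches M w₀ n) (hM2 : AtMostTwo M.R) {j : ℕ}
    (hj : j < n) {u z : M.World} (hu : chainR M.R j w₀ u) (hz : M.R u z) :
    ∃ bo : Bool, ∀ x, chainR M.R (n - 1 - j) z x → (M.V (j + 1) x ↔ bo = true) := by
  classical
  obtain ⟨xz, hxz⟩ := hB.exists_chainR (hu.snoc hz) (show j + 1 + (n - 1 - j) ≤ n by omega)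
  obtain ⟨v, hv, hvx⟩ := hB j hj u hu (decide (M.V (j + 1) xz))
  obtain ⟨xv, hxv⟩ := hB.exists_chainR (hu.snoc hv) (show j + 1 + (n - 1 - j) ≤ n by omega)
  have hzv : z = v := hB.eq_of_agree hM2 hj hu hz hv hxz hxv (by simpa using (hvx xv hxv).symm)
  exact ⟨_, hzv ▸ hvx⟩

theorem exists_sat_of_boxDia (hB : HasBranches M w₀ n) {e : ℕ} {φ : Fml ℕ} :
    ∀ (ms : List ℕ) (d : ℕ) (z : M.World), chainR M.R d w₀ z →
      d + boxDiaDepth ms + e ≤ n → Sat M (boxDia ms (boxI e φ)) z →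
      ∃ x, chainR M.R (boxDiaDepth ms + e) z x ∧ Sat M φ x
  | [], d, z, hz, hde, hsat => by
    obtain ⟨x, hx⟩ := hB.exists_chainR hz (by simpa [boxDiaDepth] using hde)
    exact ⟨x, by simpa [boxDiaDepth] using hx, sat_boxI.1 hsat x (by simpa using hx)⟩
  | m :: ms, d, z, hz, hde, hsat => by
    simp only [boxDiaDepth] at hde ⊢
    obtain ⟨y, hy⟩ := hB.exists_chainR hz (show d + m ≤ n by omega)
    obtain ⟨q, hq, hqs⟩ := sat_boxI.1 hsat y hy
    obtain ⟨x, hx, hxs⟩ :=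
      hB.exists_sat_of_boxDia ms (d + m + 1) q ((hz.trans hy).snoc hq) (by omega) hqs
    refine ⟨x, ?_, hxs⟩
    rw [show m + 1 + boxDiaDepth ms + e = m + (boxDiaDepth ms + e + 1) by omega]
    exact hy.trans ⟨q, hq, hx⟩

/-- Since a successor is determined by the value of the next variable below it
(`eq_of_agree`), each diamond of `boxDia ms` is witnessed on every branch whose leaf agrees with
all `φ`-worlds on the variables decided at the diamond depths. -/
theorem sat_of_boxDia (hB : HasBranches M w₀ n) (hM2 : AtMostTwo M.R) {e : ℕ} {φ : Fml ℕ} :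
    ∀ (ms : List ℕ) (d : ℕ) (z u : M.World), chainR M.R d w₀ z →
      d + boxDiaDepth ms + e = n → Sat M (boxDia ms (boxI e φ)) z →
      chainR M.R (boxDiaDepth ms + e) z u →
      (∀ x, Sat M φ x → ∀ j ∈ diaDepths d ms, (M.V (j + 1) x ↔ M.V (j + 1) u)) →
      Sat M φ u
  | [], _, _, u, _, _, hsat, hu, _ => sat_boxI.1 hsat u (by simpa [boxDiaDepth] using hu)
  | m :: ms, d, z, u, hz, hde, hsat, hu, hagree => by
    simp only [boxDiaDepth] at hde hu
    rw [show m + 1 + boxDiaDepth ms + e = m + (boxDiaDepth ms + e + 1) by omega] at hu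
    obtain ⟨y, hy, q, hq, hqu⟩ := chainR_add.1 hu
    obtain ⟨q', hq', hq's⟩ := sat_boxI.1 hsat y hy
    have hyd : chainR M.R (d + m) w₀ y := hz.trans hy
    obtain ⟨x, hx, hxs⟩ :=
      hB.exists_sat_of_boxDia ms (d + m + 1) q' (hyd.snoc hq') (by omega) hq's
    have hlen : n - 1 - (d + m) = boxDiaDepth ms + e := by omega
    have hqq' : q' = q := hB.eq_of_agree hM2 (by omega) hyd hq' hq (hlen ▸ hx) (hlen ▸ hqu)
      (hagree x hxs (d + m) (by simp [diaDepths]))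
    subst hqq'
    exact hB.sat_of_boxDia hM2 ms (d + m + 1) q' u (hyd.snoc hq') (by omega) hq's hqu
      fun x hx j hj => hagree x hx j (by simp [diaDepths, hj])

theorem var_of_labelFalse (hB : HasBranches M w₀ n) (hM2 : AtMostTwo M.R) {a b c fv : ℕ}
    {s₁ s₂ s₃ : Bool} (habc : 1 ≤ a ∧ a < b ∧ b < c ∧ c ≤ n)
    (hlab : Sat M (labelFalse n a b c s₁ s₂ s₃ fv) w₀) {u : M.World}
    (hu : chainR M.R n w₀ u) (h₁ : Sat M (litF (a, s₁)) u) (h₂ : Sat M (litF (b, s₂)) u)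
    (h₃ : Sat M (litF (c, s₃)) u) :
    M.V fv u := by
  rw [labelFalse_eq_boxDia] at hlab
  refine (hB.sat_of_boxDia hM2 _ 0 w₀ u rfl ?_ hlab ?_ ?_).2.2.2
  · simp only [boxDiaDepth]
    omega
  · simp only [boxDiaDepth]
    rwa [show a - 1 + 1 + (b - a - 1 + 1 + (c - b - 1 + 1 + 0)) + (n - c) = n by omega]
  · rintro x ⟨hx₁, hx₂, hx₃, -⟩ j hj
    simp only [diaDepths, List.mem_cons, List.not_mem_nil, or_false] at hj
    rw [sat_litF] at hx₁ hx₂ hx₃ h₁ h₂ h₃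
    obtain rfl | rfl | rfl := show j + 1 = a ∨ j + 1 = b ∨ j + 1 = c by omega
    · exact hx₁.trans h₁.symm
    · exact hx₂.trans h₂.symm
    · exact hx₃.trans h₃.symm

theorem propSat_cnf3_of_not_var (hB : HasBranches M w₀ n) (hM2 : AtMostTwo M.R) {k : ℕ}
    {a b c : Fin k → ℕ} {s₁ s₂ s₃ : Fin k → Bool} {fv : ℕ}
    (hrange : ∀ i, 1 ≤ a i ∧ a i < b i ∧ b i < c i ∧ c i ≤ n)
    (hlab : ∀ i,
      Sat M (labelFalse n (a i) (b i) (c i) (!(s₁ i)) (!(s₂ i)) (!(s₃ i)) fv) w₀)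
    {u : M.World} (hu : chainR M.R n w₀ u) {v : ℕ → Bool}
    (hv : ∀ p, 1 ≤ p → p ≤ n → (M.V p u ↔ v p = true)) (hf : ¬ M.V fv u) :
    PropSat v (cnf3 k a b c s₁ s₂ s₃) := by
  rw [propSat_cnf3]
  intro i
  obtain ⟨h₁, h₂, h₃, h₄⟩ := hrange i
  by_contra! hfalse
  refine hf (hB.var_of_labelFalse hM2 (hrange i) (hlab i) hu ?_ ?_ ?_) <;>
    rw [sat_litF, hv _ (by omega) (by omega)]
  · simpa using Bool.eq_not.2 hfalse.1
  · simpa using Bool.eq_not.2 hfalse.2.1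
  · simpa using Bool.eq_not.2 hfalse.2.2

theorem qbfTrue_of_sat_diaBoxI (hB : HasBranches M w₀ n) (hM2 : AtMostTwo M.R) {φ : Fml ℕ}
    {fv : ℕ} (hleaf : ∀ u v, chainR M.R n w₀ u →
      (∀ p, 1 ≤ p → p ≤ n → (M.V p u ↔ v p = true)) → ¬ M.V fv u → PropSat v φ) :
    ∀ (m d : ℕ) (u : M.World) (v : ℕ → Bool), Even d → d + 2 * m = n →
      chainR M.R d w₀ u →
      (∀ p, 1 ≤ p → p ≤ d → ∀ x, chainR M.R (2 * m) u x → (M.V p x ↔ v p = true)) →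
      Sat M (diaBoxI m (.nvar fv)) u → qbfTrue φ (d + 1) (2 * m) v
  | 0, d, u, v, _, hdn, hu, hv, hsat =>
    hleaf u v (by simpa [← hdn] using hu) (fun p hp₁ hp₂ => hv p hp₁ (by omega) u rfl) hsat
  | m + 1, d, u, v, hd, hdn, hu, hv, ⟨z, hz, hzs⟩ => by
    obtain ⟨bz, hbz⟩ := hB.exists_uniform_of_R hM2 (by omega) hu hz
    rw [show 2 * (m + 1) = 2 * m + 2 by ring, qbfTrue_add_two (by grind)]
    refine ⟨bz, fun b' => ?_⟩
    obtain ⟨z', hz', hz'x⟩ := hB (d + 1) (by omega) z (hu.snoc hz) b'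
    refine hB.qbfTrue_of_sat_diaBoxI hM2 hleaf m (d + 2) z'
      (Function.update (Function.update v (d + 1) bz) (d + 1 + 1) b') (by grind) (by omega)
      ((hu.snoc hz).snoc hz') (fun p hp₁ hp₂ x hx => ?_) (hzs z' hz')
    obtain hp | rfl | rfl : p ≤ d ∨ p = d + 1 ∨ p = d + 2 := by omega
    · rw [Function.update_of_ne (by omega), Function.update_of_ne (by omega)]
      refine hv p hp₁ hp x ?_
      rw [show 2 * (m + 1) = 2 * m + 1 + 1 by ring]
      exact ⟨z, hz, z', hz', hx⟩
    · rw [Function.update_of_ne (by omega), Function.update_self]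
      exact hbz x (by rw [show n - 1 - d = 2 * m + 1 by omega]; exact ⟨z', hz', hx⟩)
    · rw [Function.update_self]
      exact hz'x x (by rwa [show n - 1 - (d + 1) = 2 * m by omega])

end HasBranches

def bitsAssignment (t : List Bool) (p : ℕ) : Bool := t.getD (p - 1) false

theorem bitsAssignment_append_of_le {t : List Bool} {p : ℕ} (l : List Bool) (hp₁ : 1 ≤ p)
    (hp : p ≤ t.length) : bitsAssignment (t ++ l) p = bitsAssignment t p :=
  List.getD_append _ _ _ _ (by omega)

theorem bitsAssignment_append_cons (t l : List Bool) (b : Bool) :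
    bitsAssignment (t ++ b :: l) (t.length + 1) = b := by
  simp [bitsAssignment]

abbrev bitTree (n : ℕ) (φ : Fml ℕ) (fv : ℕ) : Kripke ℕ where
  World := List Bool
  nonempty := ⟨[]⟩
  R s t := s.length < n ∧ ∃ b, t = s ++ [b]
  V p t := if p = fv then ¬ PropSat (bitsAssignment t) φ else bitsAssignment t p = true

namespace bitTree
variable {n : ℕ} {φ : Fml ℕ} {fv : ℕ}

theorem atMostTwo : AtMostTwo (bitTree n φ fv).R := by
  rintro w v₁ v₂ v₃ ⟨-, b₁, rfl⟩ ⟨-, b₂, rfl⟩ ⟨-, b₃, rfl⟩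
  cases b₁ <;> cases b₂ <;> cases b₃ <;> simp

theorem V_of_ne {p : ℕ} {t : List Bool} (hp : p ≠ fv) :
    (bitTree n φ fv).V p t ↔ bitsAssignment t p = true := by
  simp [hp]

theorem exists_eq_append_of_chainR :
    ∀ {m : ℕ} {s x : List Bool}, chainR (bitTree n φ fv).R m s x →
      ∃ l, x = s ++ l ∧ l.length = m
  | 0, _, _, rfl => ⟨[], by simp, rfl⟩
  | _ + 1, _, _, ⟨_, ⟨_, b, rfl⟩, hx⟩ => by
    obtain ⟨l, rfl, rfl⟩ := exists_eq_append_of_chainR hx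
    exact ⟨b :: l, by simp, rfl⟩

theorem hasBranches (hfv : ∀ p, 1 ≤ p → p ≤ n → fv ≠ p) :
    HasBranches (bitTree n φ fv) [] n := by
  intro j hj u hu b
  obtain ⟨u, rfl, rfl⟩ := exists_eq_append_of_chainR hu
  refine ⟨u ++ [b], ⟨by simpa using hj, b, rfl⟩, fun x hx => ?_⟩
  obtain ⟨l, rfl, -⟩ := exists_eq_append_of_chainR hx
  rw [V_of_ne (hfv _ (by omega) (by simpa using hj)).symm, List.append_assoc,
    List.singleton_append]
  simp only [bitsAssignment_append_cons]

theorem sat_boxDia (σ : ℕ → Bool) {e : ℕ} {ψ : Fml ℕ} :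
    ∀ (ms : List ℕ) (t : List Bool), t.length + boxDiaDepth ms + e ≤ n →
      (∀ x : List Bool, x.length = boxDiaDepth ms + e →
        (∀ j ∈ diaDepths t.length ms, bitsAssignment (t ++ x) (j + 1) = σ j) →
        Sat (bitTree n φ fv) ψ (t ++ x)) →
      Sat (bitTree n φ fv) (boxDia ms (boxI e ψ)) t
  | [], t, _, hψ => sat_boxI.2 fun _ hx => by
    obtain ⟨l, rfl, hl⟩ := exists_eq_append_of_chainR hx
    exact hψ l (by simpa [boxDiaDepth] using hl) (by simp [diaDepths])
  | m :: ms, t, hlen, hψ => sat_boxI.2 fun _ hy => by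
    obtain ⟨l, rfl, rfl⟩ := exists_eq_append_of_chainR hy
    simp only [boxDiaDepth] at hlen hψ
    refine ⟨t ++ l ++ [σ (t.length + l.length)], ⟨by simp; omega, _, rfl⟩, ?_⟩
    refine sat_boxDia σ ms _ (by simp; omega) fun x hx hσ => ?_
    have hsplit : t ++ l ++ [σ (t.length + l.length)] ++ x =
        t ++ (l ++ σ (t.length + l.length) :: x) := by simp
    rw [hsplit]
    refine hψ _ (by simp; omega) fun j hj => ?_
    simp only [diaDepths, List.mem_cons] at hj
    rcases hj with rfl | hj
    · rw [← List.append_assoc, ← List.length_append]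
      exact bitsAssignment_append_cons _ _ _
    · rw [← hsplit]
      exact hσ j (by simpa [add_assoc] using hj)

theorem sat_labelFalse (hfv : ∀ p, 1 ≤ p → p ≤ n → fv ≠ p) {a b c : ℕ}
    {s₁ s₂ s₃ : Bool} (habc : 1 ≤ a ∧ a < b ∧ b < c ∧ c ≤ n)
    (hφ : ∀ t, bitsAssignment t a = s₁ → bitsAssignment t b = s₂ →
      bitsAssignment t c = s₃ → ¬ PropSat (bitsAssignment t) φ) :
    Sat (bitTree n φ fv) (labelFalse n a b c s₁ s₂ s₃ fv) [] := by
  obtain ⟨h₁, h₂, h₃, h₄⟩ := habc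
  rw [labelFalse_eq_boxDia]
  refine sat_boxDia (fun j => if j + 1 = a then s₁ else if j + 1 = b then s₂ else s₃) _ []
    (by simp [boxDiaDepth]; omega) fun x _ hx => ?_
  simp only [diaDepths, List.length_nil, List.nil_append, List.mem_cons, List.not_mem_nil,
    or_false, forall_eq_or_imp, forall_eq] at hx
  obtain ⟨ha, hb, hc⟩ := hx
  rw [show 0 + (a - 1) + 1 = a by omega, if_pos rfl] at ha
  rw [show 0 + (a - 1) + 1 + (b - a - 1) + 1 = b by omega, if_neg (by omega), if_pos rfl] at hb
  rw [show 0 + (a - 1) + 1 + (b - a - 1) + 1 + (c - b - 1) + 1 = c by omega, if_neg (by omega),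
    if_neg (by omega)] at hc
  simp only [List.nil_append, Sat, sat_litF]
  refine ⟨?_, ?_, ?_, ?_⟩
  · rw [if_neg (hfv a (by omega) (by omega)).symm, ha]
  · rw [if_neg (hfv b (by omega) (by omega)).symm, hb]
  · rw [if_neg (hfv c (by omega) (by omega)).symm, hc]
  · simpa [bitTree] using hφ x ha hb hc

theorem sat_diaBoxI
    (hφ : ∀ v v', (∀ p, 1 ≤ p → p ≤ n → v p = v' p) → PropSat v φ → PropSat v' φ) :
    ∀ (m : ℕ) (t : List Bool) (v : ℕ → Bool), Even t.length → t.length + 2 * m = n →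
      (∀ p, 1 ≤ p → p ≤ t.length → v p = bitsAssignment t p) →
      qbfTrue φ (t.length + 1) (2 * m) v → Sat (bitTree n φ fv) (diaBoxI m (.nvar fv)) t
  | 0, t, v, _, htn, hv, hq => by
    simpa [Sat, diaBoxI] using hφ v _ (fun p hp₁ hp₂ => hv p hp₁ (by omega)) hq
  | m + 1, t, v, ht, htn, hv, hq => by
    rw [show 2 * (m + 1) = 2 * m + 2 by ring, qbfTrue_add_two (by grind)] at hq
    obtain ⟨b, hb⟩ := hq
    refine ⟨t ++ [b], ⟨by omega, b, rfl⟩, ?_⟩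
    rintro _ ⟨-, b', rfl⟩
    refine sat_diaBoxI hφ m _ _ (by simp; grind) (by simp; omega) (fun p hp₁ hp₂ => ?_)
      (by simpa [add_assoc] using hb b')
    simp only [List.length_append, List.length_singleton] at hp₂
    obtain hp | rfl | rfl : p ≤ t.length ∨ p = t.length + 1 ∨ p = t.length + 2 := by omega
    · rw [Function.update_of_ne (by omega), Function.update_of_ne (by omega), List.append_assoc,
        bitsAssignment_append_of_le _ hp₁ hp, hv p hp₁ hp]
    · rw [Function.update_of_ne (by omega), Function.update_self, List.append_assoc,
        List.singleton_append, bitsAssignment_append_cons]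
    · rw [Function.update_self, show t.length + 2 = (t ++ [b]).length + 1 by simp,
        bitsAssignment_append_cons]

end bitTree

/-- For even `n` and a 3CNF formula `φ = ψ₁ ∧ ⋯ ∧ ψ_k` over `p₁, …, p_n`
whose `i`-th clause is `ℓ_{i1} ∨ ℓ_{i2} ∨ ℓ_{i3}` with variables `a i < b i < c i` and
signs `s₁ i, s₂ i, s₃ i`, and a variable `f` distinct from `p₁, …, p_n`, the quantified
Boolean formula `∃p₁ ∀p₂ ⋯ ∃p_{n-1} ∀p_n φ` is true iff the poor man's formula
`g = φ_exp ∧ ⋀_{i=1}^k label_false(ℓ̄_{i1} ∧ ℓ̄_{i2} ∧ ℓ̄_{i3}) ∧ (◇□)^{n/2} f̄` is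
satisfiable with respect to `F≤2`. -/
theorem stmt13 (n : ℕ) (hn : Even n) (k : ℕ)
    (a b c : Fin k → ℕ) (s₁ s₂ s₃ : Fin k → Bool)
    (hrange : ∀ i, 1 ≤ a i ∧ a i < b i ∧ b i < c i ∧ c i ≤ n)
    (fv : ℕ) (hfv : ∀ p, 1 ≤ p → p ≤ n → fv ≠ p) :
    qbfTrue
        (bigConj ((List.finRange k).map (fun i =>
          .or (litF (a i, s₁ i)) (.or (litF (b i, s₂ i)) (litF (c i, s₃ i))))))
        1 n (fun _ => false) ↔
      SatLe2 (.and (phiExp n)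
        (.and
          (bigConj ((List.finRange k).map (fun i =>
            labelFalse n (a i) (b i) (c i) (!(s₁ i)) (!(s₂ i)) (!(s₃ i)) fv)))
          (diaBoxI (n / 2) (.nvar fv)))) := by
  have hn2 : 2 * (n / 2) = n := Nat.two_mul_div_two_of_even hn
  change qbfTrue (cnf3 k a b c s₁ s₂ s₃) (0 + 1) n _ ↔ _
  conv_lhs => rw [← hn2]
  simp only [SatLe2, Sat, sat_bigConj, List.forall_mem_map, List.mem_finRange, true_implies]
  constructor
  · intro hq
    refine ⟨bitTree n (cnf3 k a b c s₁ s₂ s₃) fv, bitTree.atMostTwo, [],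
      sat_phiExp_iff.2 (bitTree.hasBranches hfv), fun i => ?_, ?_⟩
    · refine bitTree.sat_labelFalse hfv (hrange i) fun t h₁ h₂ h₃ hsat => ?_
      simpa [h₁, h₂, h₃] using propSat_cnf3.1 hsat i
    · exact bitTree.sat_diaBoxI (fun _ _ => propSat_cnf3_congr hrange) (n / 2) [] _ ⟨0, rfl⟩
        (by simpa using hn2) (fun _ _ _ => by simp_all) hq
  · rintro ⟨M, hM2, w, hphi, hlab, hdia⟩
    have hB := sat_phiExp_iff.1 hphi
    exact hB.qbfTrue_of_sat_diaBoxI hM2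
      (fun _ _ hu hv hf => hB.propSat_cnf3_of_not_var hM2 hrange hlab hu hv hf)
      (n / 2) 0 w _ ⟨0, rfl⟩ (by simpa using hn2) rfl (fun _ _ _ => by omega) hdia

end PoorMansModal
end

section
/- Let φ be a modal formula built from propositional variables, atomic negation p̄, ∧, ∨, □, and the constants true and false (no ◇ and no general negation). Then φ is satisfiable with respect to the class of all frames if and only if the propositional formula obtained from φ by replacing every outermost subformula of the form □ψ by the constant true is propositionally satisfiable. -/
namespace PoorMansModal

/-- Formulas built from variables, atomic negation, `∧`, `∨`, `□`, and the constants
`true` and `false` (no `◇` and no general negation). -/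
def Frag15 : Fml ℕ → Prop
  | .var _ => True
  | .nvar _ => True
  | .and φ ψ => Frag15 φ ∧ Frag15 ψ
  | .or φ ψ => Frag15 φ ∧ Frag15 ψ
  | .box φ => Frag15 φ
  | .tru => True
  | .fls => True
  | _ => False

/-- Replace every outermost subformula of the form `□ψ` by the constant `true`. -/
def stripBox : Fml ℕ → Fml ℕ
  | .box _ => .tru
  | .and φ ψ => .and (stripBox φ) (stripBox ψ)
  | .or φ ψ => .or (stripBox φ) (stripBox ψ)
  | .neg φ => .neg (stripBox φ)
  | .dia φ => .dia (stripBox φ)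
  | a => a

open Classical in
lemma stmt15_fwd (M : Kripke ℕ) (w : M.World) :
    ∀ φ : Fml ℕ, Frag15 φ → Sat M φ w →
      PropSat (fun p => decide (M.V p w)) (stripBox φ) := by
  intro φ
  induction φ with
  | var p => intro _ h; simpa [PropSat, stripBox, Sat, propModel] using h
  | nvar p => intro _ h; simpa [PropSat, stripBox, Sat, propModel] using h
  | and φ ψ ihφ ihψ =>
      intro hf h
      exact ⟨ihφ hf.1 h.1, ihψ hf.2 h.2⟩
  | or φ ψ ihφ ihψ =>
      intro hf h
      rcases h with h | h
      · exact Or.inl (ihφ hf.1 h)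
      · exact Or.inr (ihψ hf.2 h)
  | box φ _ => intro _ _; trivial
  | tru => intro _ _; trivial
  | fls => intro _ h; exact h.elim
  | neg φ _ => intro hf; exact hf.elim
  | dia φ _ => intro hf; exact hf.elim

lemma stmt15_bwd (v : ℕ → Bool) :
    ∀ φ : Fml ℕ, Frag15 φ → PropSat v (stripBox φ) → Sat (propModel v) φ () := by
  intro φ
  induction φ with
  | var p => intro _ h; exact h
  | nvar p => intro _ h; exact h
  | and φ ψ ihφ ihψ => intro hf h; exact ⟨ihφ hf.1 h.1, ihψ hf.2 h.2⟩
  | or φ ψ ihφ ihψ =>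
      intro hf h
      rcases h with h | h
      · exact Or.inl (ihφ hf.1 h)
      · exact Or.inr (ihψ hf.2 h)
  | box φ _ => intro _ _; intro u hu; exact hu.elim
  | tru => intro _ _; trivial
  | fls => intro _ h; exact h.elim
  | neg φ _ => intro hf; exact hf.elim
  | dia φ _ => intro hf; exact hf.elim

/-- A formula built from variables, atomic negation, `∧`, `∨`, `□`,
`true`, and `false` is satisfiable with respect to the class of all frames iff the
propositional formula obtained by replacing every outermost `□ψ` subformula by `true`
is propositionally satisfiable. -/
theorem stmt15 (φ : Fml ℕ) (hφ : Frag15 φ) :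
    SatAll φ ↔ ∃ v : ℕ → Bool, PropSat v (stripBox φ) := by
  constructor
  · rintro ⟨M, w, h⟩
    classical
    exact ⟨fun p => decide (M.V p w), stmt15_fwd M w φ hφ h⟩
  · rintro ⟨v, h⟩
    exact ⟨propModel v, (), stmt15_bwd v φ hφ h⟩

end PoorMansModal
end

section
/- Let φ be a modal formula built from ∧, □, ◇, and the constants true and false (possibly with propositional variables but without any negation), and let t be a propositional variable not occurring in φ. Then φ is satisfiable with respect to the class of all frames if and only if the formula φ[true := t] ∧ ⋀_{i=0}^{md(φ)} □^i t (in which the constant true no longer occurs) is satisfiable with respect to the class of all frames. -/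
namespace PoorMansModal

/-- Formulas built from variables, `∧`, `□`, `◇`, and the constants `true` and `false`
(no negation of any kind). -/
def Frag17 : Fml ℕ → Prop
  | .var _ => True
  | .and φ ψ => Frag17 φ ∧ Frag17 ψ
  | .box φ => Frag17 φ
  | .dia φ => Frag17 φ
  | .tru => True
  | .fls => True
  | _ => False

/-- `φ[true := t]`: replace every occurrence of the constant `true` by the variable `t`. -/
def substT (t : ℕ) : Fml ℕ → Fml ℕ
  | .tru => .var t
  | .neg φ => .neg (substT t φ)
  | .and φ ψ => .and (substT t φ) (substT t ψ)
  | .or φ ψ => .or (substT t φ) (substT t ψ)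
  | .box φ => .box (substT t φ)
  | .dia φ => .dia (substT t φ)
  | a => a

/-! Making `t` true at every world turns a model of `φ` into a model of the translated
formula: `t` does not occur in `φ`, and once `t` holds everywhere it is interchangeable with
`true`. Conversely, a formula without negation is monotone, so `φ[true := t]` implies `φ`
because `t` implies `true`. -/

def Kripke.setTrue {α : Type} [DecidableEq α] (M : Kripke α) (t : α) : Kripke α :=
  { M with V := fun p w => p = t ∨ M.V p w }

lemma sat_bigConj_iff {α : Type} (M : Kripke α) (l : List (Fml α)) (w : M.World) :
    Sat M (bigConj l) w ↔ ∀ ψ ∈ l, Sat M ψ w := by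
  induction l with
  | nil => simp [bigConj, Sat]
  | cons φ rest ih =>
    cases rest with
    | nil => simp [bigConj]
    | cons ψ rest => simp only [bigConj, Sat, ih, List.forall_mem_cons]

lemma sat_boxI_of_forall {α : Type} {M : Kripke α} {ψ : Fml α} (h : ∀ v, Sat M ψ v) :
    ∀ (i : ℕ) (w : M.World), Sat M (boxI i ψ) w
  | 0, w => h w
  | i + 1, _ => fun v _ => sat_boxI_of_forall h i v

lemma sat_setTrue_iff {α : Type} [DecidableEq α] {M : Kripke α} {t : α} {φ : Fml α}
    (ht : ¬ occursV t φ) (w : M.World) : Sat (M.setTrue t) φ w ↔ Sat M φ w := by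
  induction φ generalizing w with
  | var p | nvar p =>
    have : p ≠ t := fun h => ht h.symm
    simp [Sat, Kripke.setTrue, this]
  | neg φ ih => exact not_congr (ih ht w)
  | and φ ψ ihφ ihψ | or φ ψ ihφ ihψ =>
    simp only [occursV, not_or] at ht
    simp only [Sat, ihφ ht.1, ihψ ht.2]
  | box φ ih => exact forall_congr' fun v => imp_congr Iff.rfl (ih ht v)
  | dia φ ih => exact exists_congr fun v => and_congr Iff.rfl (ih ht v)
  | tru | fls => exact Iff.rfl

lemma sat_substT_iff_of_forall {M : Kripke ℕ} {t : ℕ} (htrue : ∀ v, M.V t v) (φ : Fml ℕ)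
    (w : M.World) : Sat M (substT t φ) w ↔ Sat M φ w := by
  induction φ generalizing w with
  | var _ | nvar _ | fls => exact Iff.rfl
  | tru => exact iff_of_true (htrue w) trivial
  | neg φ ih => exact not_congr (ih w)
  | and φ ψ ihφ ihψ | or φ ψ ihφ ihψ => simp only [substT, Sat, ihφ, ihψ]
  | box φ ih => exact forall_congr' fun v => imp_congr Iff.rfl (ih v)
  | dia φ ih => exact exists_congr fun v => and_congr Iff.rfl (ih v)

lemma Frag17.sat_of_sat_substT {M : Kripke ℕ} {t : ℕ} {φ : Fml ℕ} (hφ : Frag17 φ)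
    {w : M.World} (h : Sat M (substT t φ) w) : Sat M φ w := by
  induction φ generalizing w with
  | var _ | fls => exact h
  | tru => trivial
  | and φ ψ ihφ ihψ => exact ⟨ihφ hφ.1 h.1, ihψ hφ.2 h.2⟩
  | box φ ih => exact fun v hv => ih hφ (h v hv)
  | dia φ ih =>
    obtain ⟨v, hv, hs⟩ := h
    exact ⟨v, hv, ih hφ hs⟩
  | nvar _ | neg _ _ | or _ _ _ _ => exact hφ.elim

/-- For a formula `φ` built from variables, `∧`, `□`, `◇`, `true`, and
`false` (without any negation) and a variable `t` not occurring in `φ`, `φ` is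
satisfiable with respect to the class of all frames iff
`φ[true := t] ∧ ⋀_{i=0}^{md(φ)} □^i t` is satisfiable with respect to the class of all
frames. -/
theorem stmt17 (φ : Fml ℕ) (hφ : Frag17 φ) (t : ℕ) (ht : ¬ occursV t φ) :
    SatAll φ ↔
      SatAll (.and (substT t φ)
        (bigConj ((List.range (mdep φ + 1)).map (fun i => boxI i (.var t))))) := by
  constructor
  · rintro ⟨M, w, hw⟩
    have htrue : ∀ v, Sat (M.setTrue t) (.var t) v := fun _ => Or.inl rfl
    refine ⟨M.setTrue t, w, ?_, ?_⟩
    · exact (sat_substT_iff_of_forall htrue φ w).2 ((sat_setTrue_iff ht w).2 hw)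
    · refine (sat_bigConj_iff _ _ _).2 (List.forall_mem_map.2 fun i _ => ?_)
      exact sat_boxI_of_forall htrue i w
  · rintro ⟨M, w, hw, -⟩
    exact ⟨M, w, hφ.sat_of_sat_substT hw⟩

end PoorMansModal
end

section
/- Let φ be a modal formula built from the single propositional variable p and the operations ¬ (general negation), ∧, and □. For each k, define the variable-free formula f_k(ψ) by: f_k(p) = ◇^{k+1}□false, f_k(¬ψ) = ¬f_k(ψ), f_k(ψ ∧ ξ) = f_k(ψ) ∧ f_k(ξ), and f_k(□ψ) = □(◇^k□false ∨ f_k(ψ)). Then φ is satisfiable with respect to the class of all frames if and only if the variable-free formula f_{md(φ)}(φ) is satisfiable with respect to the class of all frames. -/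
namespace PoorMansModal

/-- Formulas built from the single propositional variable `p` and the operations `¬`
(general negation), `∧`, and `□`. -/
def Frag19 (p : ℕ) : Fml ℕ → Prop
  | .var q => q = p
  | .neg φ => Frag19 p φ
  | .and φ ψ => Frag19 p φ ∧ Frag19 p ψ
  | .box φ => Frag19 p φ
  | _ => False

/-- The translation `f_k` into variable-free formulas:
`f_k(p) = ◇^{k+1} □ false`, `f_k(¬ψ) = ¬ f_k(ψ)`, `f_k(ψ ∧ ξ) = f_k(ψ) ∧ f_k(ξ)`, and
`f_k(□ψ) = □(◇^k □ false ∨ f_k(ψ))`. -/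
def fk (k : ℕ) : Fml ℕ → Fml ℕ
  | .var _ => diaI (k + 1) (.box .fls)
  | .neg φ => .neg (fk k φ)
  | .and φ ψ => .and (fk k φ) (fk k ψ)
  | .box φ => .box (.or (diaI k (.box .fls)) (fk k φ))
  | a => a

/-! `φ` holds at `w` iff `f_k(φ)` holds at the root of a model in which `◇^{k+1}□false` plays
the role of `p`. Unravel the model into layers indexed by the remaining height `h ≤ k`, and
from every `p`-world start a chain of `k + 1` steps ending in a dead end, shared by all
`p`-worlds. The unravelled part reaches dead ends only in at most `h` steps, the chain only
in at least `k + 1` steps, so `◇^{k+1}□false` holds exactly at the `p`-worlds and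
`◇^k□false` exactly at the chain entries, which the guard in `f_k(□ψ)` skips.
Conversely, in any model of `f_k(φ)`, deleting the edges into worlds satisfying `◇^k□false`
and interpreting `p` as `◇^{k+1}□false` yields a model of `φ`. -/

section Forward

variable (M : Kripke ℕ) (p k : ℕ)

/-- Tree nodes carry their remaining height, spine nodes their distance to the dead end
`spine 0`. -/
inductive Node (W : Type) : Type where
  | tree : W → ℕ → Node W
  | spine : ℕ → Node W

inductive Step : Node M.World → Node M.World → Prop where
  | tree {w v : M.World} {h : ℕ} : M.R w v → Step (.tree w (h + 1)) (.tree v h)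
  | enter {w : M.World} {h : ℕ} : M.V p w → Step (.tree w h) (.spine k)
  | spine {n : ℕ} : Step (.spine (n + 1)) (.spine n)

def spineModel : Kripke ℕ where
  World := Node M.World
  nonempty := ⟨.spine 0⟩
  R := Step M p k
  V := fun _ _ => False

variable {M p k}

lemma sat_diaI_box_fls_spine_iff {m n : ℕ} :
    Sat (spineModel M p k) (diaI m (.box .fls)) (.spine n) ↔ m = n := by
  induction m generalizing n with
  | zero =>
    cases n with
    | zero => exact ⟨fun _ => rfl, fun _ v hv => by cases hv⟩
    | succ n => exact ⟨fun h => (h _ Step.spine).elim, fun h => by omega⟩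
  | succ m ih =>
    constructor
    · rintro ⟨v, hv, hm⟩
      cases hv
      rw [ih] at hm
      omega
    · rintro rfl
      exact ⟨.spine m, Step.spine, ih.2 rfl⟩

lemma sat_diaI_box_fls_tree_of_V {w : M.World} {h : ℕ} (hw : M.V p w) :
    Sat (spineModel M p k) (diaI (k + 1) (.box .fls)) (.tree w h) :=
  ⟨.spine k, Step.enter hw, sat_diaI_box_fls_spine_iff.2 rfl⟩

lemma sat_diaI_box_fls_tree {m h : ℕ} {w : M.World}
    (hm : Sat (spineModel M p k) (diaI m (.box .fls)) (.tree w h)) :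
    m ≤ h ∨ (k + 1 ≤ m ∧ (m = k + 1 → M.V p w)) := by
  induction m generalizing w h with
  | zero => exact .inl (Nat.zero_le h)
  | succ m ih =>
    obtain ⟨v, hv, hm⟩ := hm
    cases hv with
    | tree _ => rcases ih hm with hle | ⟨hge, -⟩ <;> omega
    | enter hw =>
      rw [sat_diaI_box_fls_spine_iff] at hm
      exact .inr ⟨by omega, fun _ => hw⟩

lemma V_of_sat_diaI_box_fls_tree {w : M.World} {h : ℕ} (hh : h ≤ k)
    (hw : Sat (spineModel M p k) (diaI (k + 1) (.box .fls)) (.tree w h)) : M.V p w := by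
  rcases sat_diaI_box_fls_tree hw with hle | ⟨-, hV⟩
  · omega
  · exact hV rfl

lemma not_sat_diaI_box_fls_tree {v : M.World} {h : ℕ} (hh : h < k) :
    ¬ Sat (spineModel M p k) (diaI k (.box .fls)) (.tree v h) := fun hv => by
  rcases sat_diaI_box_fls_tree hv with hle | ⟨hge, -⟩ <;> omega

lemma sat_iff_sat_fk_spineModel {ψ : Fml ℕ} (hψ : Frag19 p ψ) {w : M.World} {h : ℕ}
    (hψh : mdep ψ ≤ h) (hh : h ≤ k) :
    Sat M ψ w ↔ Sat (spineModel M p k) (fk k ψ) (.tree w h) := by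
  induction ψ generalizing w h with
  | var q =>
    obtain rfl : q = p := hψ
    exact ⟨sat_diaI_box_fls_tree_of_V, V_of_sat_diaI_box_fls_tree hh⟩
  | neg ψ ih => exact not_congr (ih hψ hψh hh)
  | and ψ ξ ihψ ihξ =>
    exact and_congr (ihψ hψ.1 (le_of_max_le_left hψh) hh)
      (ihξ hψ.2 (le_of_max_le_right hψh) hh)
  | box ψ ih =>
    cases h with
    | zero => exact absurd hψh (Nat.not_succ_le_zero _)
    | succ h =>
      have hψh' : mdep ψ ≤ h := Nat.le_of_succ_le_succ hψh
      constructor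
      · intro hbox x hx
        cases hx with
        | tree hR => exact .inr ((ih hψ hψh' (by omega)).1 (hbox _ hR))
        | enter _ => exact .inl (sat_diaI_box_fls_spine_iff.2 rfl)
      · intro hbox v hR
        rcases hbox _ (Step.tree hR) with hguard | hv
        · exact absurd hguard (not_sat_diaI_box_fls_tree (by omega))
        · exact (ih hψ hψh' (by omega)).2 hv
  | nvar | or | dia | tru | fls => exact hψ.elim

end Forward

def guardModel (N : Kripke ℕ) (k : ℕ) : Kripke ℕ where
  World := N.World
  nonempty := N.nonempty
  R := fun a b => N.R a b ∧ ¬ Sat N (diaI k (.box .fls)) b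
  V := fun _ w => Sat N (diaI (k + 1) (.box .fls)) w

lemma sat_guardModel_iff {N : Kripke ℕ} {p k : ℕ} {ψ : Fml ℕ} (hψ : Frag19 p ψ)
    (w : N.World) : Sat (guardModel N k) ψ w ↔ Sat N (fk k ψ) w := by
  induction ψ generalizing w with
  | var => rfl
  | neg ψ ih => exact not_congr (ih hψ w)
  | and ψ ξ ihψ ihξ => exact and_congr (ihψ hψ.1 w) (ihξ hψ.2 w)
  | box ψ ih =>
    constructor
    · intro hbox v hR
      by_cases hguard : Sat N (diaI k (.box .fls)) v
      · exact .inl hguard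
      · exact .inr ((ih hψ v).1 (hbox v ⟨hR, hguard⟩))
    · rintro hbox v ⟨hR, hguard⟩
      exact (ih hψ v).2 ((hbox v hR).resolve_left hguard)
  | nvar | or | dia | tru | fls => exact hψ.elim

theorem satAll_iff_satAll_fk {p k : ℕ} {φ : Fml ℕ} (hφ : Frag19 p φ) (hk : mdep φ ≤ k) :
    SatAll φ ↔ SatAll (fk k φ) := by
  constructor
  · rintro ⟨M, w, hw⟩
    exact ⟨spineModel M p k, .tree w k, (sat_iff_sat_fk_spineModel hφ hk le_rfl).1 hw⟩
  · rintro ⟨N, w, hw⟩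
    exact ⟨guardModel N k, w, (sat_guardModel_iff hφ w).2 hw⟩

/-- A modal formula `φ` built from the single propositional variable `p`
and `¬`, `∧`, `□` is satisfiable with respect to the class of all frames iff the
variable-free formula `f_{md(φ)}(φ)` is satisfiable with respect to the class of all
frames. -/
theorem stmt19 (p : ℕ) (φ : Fml ℕ) (hφ : Frag19 p φ) :
    SatAll φ ↔ SatAll (fk (mdep φ) φ) :=
  satAll_iff_satAll_fk hφ le_rfl

end PoorMansModal
end
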